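/- For n ≥ 2, s ≥ 0 and any positive reals v_1, …, v_n: P( ( ⋃_τ E_τ(s) ) ∩ { R_i(s) ≤ v_i for all i = 1, …, n } ) = e^{- s · Σ_{1 ≤ i < j ≤ n} x_i x_j } · ∏_{i=1}^{n} ( 1 − e^{- x_i v_i} ), the union being over all permutations τ of {1, …, n}. That is, conditionally on the event { S > s } = ⋃_τ E_τ(s), the residuals R_1(s), …, R_n(s) are independent exponential random variables with respective rates x_1, …, x_n. -/

import Mathlib

/-!
Put `c_τ(τ m) = s · Σ_{k<m} x_{τ k}`. Almost surely `ξ ≥ 0`, and on the orthant the event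
`E_τ(s) ∩ {R(s) ≤ v}` is exactly `c_τ + B_τ`, where `B_τ` is the set of `u ∈ [0, v]` strictly
increasing along `τ`; there the residuals are `ξ - c_τ`. By memorylessness, translating by
`c ≥ 0` scales the product exponential law of a set in the orthant by `e^{-Σ x_i c_i}`, and
`Σ x_i c_τ(i) = s Σ_{i<j} x_i x_j` does not depend on `τ`. The `E_τ(s)` are disjoint and the `B_τ`
tile `[0, v]` up to ties, which are null, so the probability is `e^{-s Σ_{i<j} x_i x_j} P(ξ ≤ v)`.
-/

open MeasureTheory ProbabilityTheory Real

/-- The event `E_τ(s)`: for every consecutive pair of positions `j, j+1` (0-indexed),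
`ξ_{τ(j+1)} > ξ_{τ(j)} + s · x_{τ(j)}`. -/
def gapEvent {Ω : Type*} (n : ℕ) (x : Fin n → ℝ) (ξ : Fin n → Ω → ℝ) (s : ℝ)
    (τ : Equiv.Perm (Fin n)) : Set Ω :=
  {ω | ∀ j : ℕ, ∀ hj : j + 1 < n,
    ξ (τ ⟨j + 1, hj⟩) ω > ξ (τ ⟨j, Nat.lt_of_succ_lt hj⟩) ω
      + s * x (τ ⟨j, Nat.lt_of_succ_lt hj⟩)}

/-- `Σ_{1 ≤ i < j ≤ n} x_i x_j`. -/
def pairSum (n : ℕ) (x : Fin n → ℝ) : ℝ :=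
  ∑ i : Fin n, ∑ j ∈ Finset.Ioi i, x i * x j

/-- The residual `R_i(s) = ξ_i − s · Σ_{j ≠ i} x_j · 1{ξ_j < ξ_i}`. -/
noncomputable def residualVar {Ω : Type*} (n : ℕ) (x : Fin n → ℝ) (ξ : Fin n → Ω → ℝ)
    (s : ℝ) (i : Fin n) (ω : Ω) : ℝ :=
  ξ i ω - s * ∑ j ∈ Finset.univ.erase i, x j * (if ξ j ω < ξ i ω then 1 else 0)

open Set Function

section PairSum

variable {n : ℕ}

lemma two_mul_pairSum (x : Fin n → ℝ) :
    2 * pairSum n x = ∑ i, x i * (∑ j, x j - x i) := by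
  calc 2 * pairSum n x = ∑ i, ∑ j ∈ Finset.Ioi i, (x j * x i + x i * x j) := by
        simp only [pairSum, Finset.mul_sum]
        refine Finset.sum_congr rfl fun i _ => Finset.sum_congr rfl fun j _ => by ring
    _ = ∑ i, ∑ j ∈ {i}ᶜ, x j * x i := Finset.sum_sum_Ioi_add_eq_sum_sum_off_diag _
    _ = ∑ i, x i * (∑ j, x j - x i) := by
        refine Finset.sum_congr rfl fun i _ => ?_
        rw [← Finset.sum_mul, ← Finset.sum_compl_add_sum {i}, Finset.sum_singleton]
        ring

lemma pairSum_comp_perm (x : Fin n → ℝ) (τ : Equiv.Perm (Fin n)) :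
    pairSum n (x ∘ τ) = pairSum n x := by
  have h := two_mul_pairSum (x ∘ τ)
  simp only [comp_apply, Equiv.sum_comp τ x,
    Equiv.sum_comp τ fun i => x i * (∑ j, x j - x i)] at h
  linarith [two_mul_pairSum x]

end PairSum

section Exponential

lemma expMeasure_eq_withDensity (r : ℝ) :
    expMeasure r = volume.withDensity (exponentialPDF r) := rfl

instance nullSingletonClass_expMeasure (r : ℝ) : NullSingletonClass (expMeasure r) :=
  ⟨fun a => withDensity_absolutelyContinuous _ _ (measure_singleton a)⟩

lemma expMeasure_Iio_zero (r : ℝ) : expMeasure r (Iio 0) = 0 := by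
  rw [expMeasure_eq_withDensity, withDensity_apply _ measurableSet_Iio]
  exact lintegral_exponentialPDF_of_nonpos le_rfl

lemma expMeasure_Icc_zero {r t : ℝ} (hr : 0 < r) (ht : 0 ≤ t) :
    expMeasure r (Icc 0 t) = ENNReal.ofReal (1 - exp (-(r * t))) := by
  have := isProbabilityMeasure_expMeasure hr
  rw [← Ici_inter_Iic, inter_comm, measure_inter_conull (by rw [compl_Ici, expMeasure_Iio_zero]),
    ← ofReal_cdf, cdf_expMeasure_eq hr, if_pos ht]

lemma indicator_Ici_exponentialPDF_add (r : ℝ) {a : ℝ} (ha : 0 ≤ a) (u : ℝ) :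
    (Ici 0).indicator (fun u => exponentialPDF r (u + a)) u
      = ENNReal.ofReal (exp (-(r * a))) * exponentialPDF r u := by
  by_cases hu : 0 ≤ u
  · rw [indicator_of_mem (mem_Ici.2 hu), exponentialPDF_of_nonneg (by linarith),
      exponentialPDF_of_nonneg hu, ← ENNReal.ofReal_mul (exp_nonneg _), mul_left_comm, ← exp_add]
    ring_nf
  · rw [indicator_of_notMem (notMem_Ici.2 (not_le.1 hu)), exponentialPDF_of_neg (not_le.1 hu),
      mul_zero]

lemma map_sub_restrict_Ici_expMeasure (r : ℝ) {a : ℝ} (ha : 0 ≤ a) :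
    ((expMeasure r).restrict (Ici a)).map (· - a)
      = ENNReal.ofReal (exp (-(r * a))) • expMeasure r := by
  ext B hB
  have hpre : MeasurableSet ((· - a) ⁻¹' B) := measurable_sub_const a hB
  rw [Measure.map_apply (measurable_sub_const a) hB, Measure.restrict_apply hpre,
    Measure.smul_apply, smul_eq_mul, expMeasure_eq_withDensity,
    withDensity_apply _ (hpre.inter measurableSet_Ici), withDensity_apply _ hB,
    ← lintegral_const_mul' _ _ ENNReal.ofReal_ne_top,
    inter_comm, ← setLIntegral_indicator measurableSet_Ici]
  calc ∫⁻ t in (· - a) ⁻¹' B, (Ici a).indicator (exponentialPDF r) t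
      = ∫⁻ t in (· - a) ⁻¹' B,
          (Ici 0).indicator (fun u => exponentialPDF r (u + a)) (t - a) := by
        refine lintegral_congr fun t => ?_
        simp only [indicator, mem_Ici, sub_nonneg, sub_add_cancel]
    _ = ∫⁻ u in B, (Ici 0).indicator (fun u => exponentialPDF r (u + a)) u :=
        (measurePreserving_sub_right volume a).setLIntegral_comp_preimage_emb
          (MeasurableEquiv.subRight a).measurableEmbedding _ _
    _ = ∫⁻ u in B, ENNReal.ofReal (exp (-(r * a))) * exponentialPDF r u := by
        simp_rw [indicator_Ici_exponentialPDF_add r ha]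

end Exponential

section Product

variable {ι : Type*} [Fintype ι]

lemma MeasureTheory.Measure.pi_smul {α : ι → Type*} [∀ i, MeasurableSpace (α i)]
    (μ : ∀ i, Measure (α i)) [∀ i, IsFiniteMeasure (μ i)] (c : ι → ENNReal) (hc : ∀ i, c i ≠ ⊤) :
    Measure.pi (fun i => c i • μ i) = (∏ i, c i) • Measure.pi μ := by
  have := fun i => (μ i).smul_finite (hc i)
  refine Measure.pi_eq fun B hB => ?_
  simp only [Measure.smul_apply, Measure.pi_pi, smul_eq_mul, Finset.prod_mul_distrib]

variable {x : ι → ℝ}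

lemma map_sub_restrict_Ici_pi_expMeasure (hx : ∀ i, 0 < x i) {c : ι → ℝ} (hc : 0 ≤ c) :
    ((Measure.pi fun i => expMeasure (x i)).restrict (Ici c)).map (· - c)
      = ENNReal.ofReal (exp (-∑ i, x i * c i)) • Measure.pi fun i => expMeasure (x i) := by
  have := fun i => isProbabilityMeasure_expMeasure (hx i)
  rw [← pi_univ_Ici, Measure.restrict_pi_pi]
  have hsub : (· - c) = fun (y : ι → ℝ) i => y i - c i := rfl
  rw [hsub, Measure.pi_map_pi fun i => (measurable_sub_const (c i)).aemeasurable]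
  simp_rw [map_sub_restrict_Ici_expMeasure _ (hc _)]
  rw [Measure.pi_smul _ _ fun _ => ENNReal.ofReal_ne_top, ← ENNReal.ofReal_prod_of_nonneg
    fun _ _ => exp_nonneg _, ← exp_sum, ← Finset.sum_neg_distrib]

lemma pi_expMeasure_preimage_sub (hx : ∀ i, 0 < x i) {c : ι → ℝ} (hc : 0 ≤ c)
    {B : Set (ι → ℝ)} (hB : MeasurableSet B) (hB0 : B ⊆ Ici 0) :
    Measure.pi (fun i => expMeasure (x i)) ((· - c) ⁻¹' B)
      = ENNReal.ofReal (exp (-∑ i, x i * c i)) * Measure.pi (fun i => expMeasure (x i)) B := by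
  have h := congrArg (· B) (map_sub_restrict_Ici_pi_expMeasure hx hc)
  have hpre : (· - c) ⁻¹' B ⊆ Ici c := fun y hy => mem_Ici.2 (sub_nonneg.1 (mem_Ici.1 (hB0 hy)))
  simpa only [Measure.map_apply (measurable_sub_const c) hB,
    Measure.restrict_apply (measurable_sub_const c hB), inter_eq_left.2 hpre,
    Measure.smul_apply, smul_eq_mul] using h

lemma pi_expMeasure_compl_Ici_zero (hx : ∀ i, 0 < x i) :
    Measure.pi (fun i => expMeasure (x i)) (Ici 0)ᶜ = 0 := by
  have := fun i => isProbabilityMeasure_expMeasure (hx i)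
  have hsub : (Ici (0 : ι → ℝ))ᶜ ⊆ ⋃ i, Function.eval i ⁻¹' Iio 0 := by
    intro y hy
    simpa [Pi.le_def] using hy
  exact measure_mono_null hsub (measure_iUnion_null fun i =>
    Measure.pi_eval_preimage_null _ (expMeasure_Iio_zero (x i)))

lemma pi_expMeasure_Icc_zero (hx : ∀ i, 0 < x i) {v : ι → ℝ} (hv : 0 ≤ v) :
    Measure.pi (fun i => expMeasure (x i)) (Icc 0 v)
      = ∏ i, ENNReal.ofReal (1 - exp (-(x i * v i))) := by
  have := fun i => isProbabilityMeasure_expMeasure (hx i)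
  rw [← pi_univ_Icc, Measure.pi_pi]
  exact Finset.prod_congr rfl fun i _ => expMeasure_Icc_zero (hx i) (hv i)

end Product

section Ties

lemma ProbabilityTheory.IndepFun.measure_eq_eq_zero {Ω α : Type*} [MeasurableSpace Ω]
    [MeasurableSpace α] [MeasurableEq α] {μ : Measure Ω} [IsFiniteMeasure μ] {X Y : Ω → α}
    (hXY : IndepFun X Y μ) (hX : Measurable X) (hY : Measurable Y)
    [NullSingletonClass (μ.map Y)] :
    μ {ω | X ω = Y ω} = 0 := by
  have hprod := (indepFun_iff_map_prod_eq_prod_map_map hX.aemeasurable hY.aemeasurable).1 hXY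
  have hdiag : MeasurableSet {p : α × α | p.1 = p.2} := measurableSet_diagonal
  rw [show {ω | X ω = Y ω} = (fun ω => (X ω, Y ω)) ⁻¹' {p : α × α | p.1 = p.2} from rfl,
    ← Measure.map_apply (hX.prodMk hY) hdiag, hprod, Measure.prod_apply hdiag]
  simp

lemma MeasureTheory.Measure.pi_coord_eq_coord_null {ι α : Type*} [Fintype ι] [MeasurableSpace α]
    [MeasurableEq α] {μ : ι → Measure α}
    [∀ i, IsProbabilityMeasure (μ i)] [∀ i, NullSingletonClass (μ i)] {i j : ι} (hij : i ≠ j) :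
    Measure.pi μ {u | u i = u j} = 0 := by
  have hindep : IndepFun (fun u : ι → α => u i) (fun u => u j) (Measure.pi μ) :=
    (iIndepFun_pi (μ := μ) (X := fun _ (t : α) => t) fun _ => aemeasurable_id).indepFun hij
  have : NullSingletonClass ((Measure.pi μ).map fun u => u j) := by
    rw [(measurePreserving_eval μ j).map_eq]; infer_instance
  exact hindep.measure_eq_eq_zero (measurable_pi_apply i) (measurable_pi_apply j)

end Ties

section Ordering

variable {n : ℕ}

lemma Fin.strictMono_iff_lt_of_succ_lt {α : Type*} [Preorder α] {f : Fin n → α} :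
    StrictMono f ↔ ∀ j (hj : j + 1 < n), f ⟨j, Nat.lt_of_succ_lt hj⟩ < f ⟨j + 1, hj⟩ := by
  refine ⟨fun h j hj => h (Fin.mk_lt_mk.2 j.lt_succ_self), fun h => ?_⟩
  cases n with
  | zero => exact fun a => a.elim0
  | succ m => exact Fin.strictMono_iff_lt_succ.2 fun i => h i (Nat.succ_lt_succ i.2)

lemma Equiv.Perm.eq_of_strictMono_comp {α : Type*} [LinearOrder α] {u : Fin n → α}
    {τ σ : Equiv.Perm (Fin n)} (hτ : StrictMono (u ∘ τ)) (hσ : StrictMono (u ∘ σ)) : τ = σ := by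
  have eq_sort {ρ : Equiv.Perm (Fin n)} (h : StrictMono (u ∘ ρ)) : ρ = Tuple.sort u :=
    Tuple.eq_sort_iff.2 ⟨h.monotone, fun _ _ hij he => absurd he (h hij).ne⟩
  rw [eq_sort hτ, eq_sort hσ]

variable {Ω : Type*} {x : Fin n → ℝ} {s : ℝ}

lemma strictMono_comp_of_mem_gapEvent (hx : ∀ i, 0 ≤ x i) (hs : 0 ≤ s) {ξ : Fin n → Ω → ℝ}
    {τ : Equiv.Perm (Fin n)} {ω : Ω} (hω : ω ∈ gapEvent n x ξ s τ) :
    StrictMono ((fun i => ξ i ω) ∘ τ) :=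
  Fin.strictMono_iff_lt_of_succ_lt.2 fun j hj =>
    lt_of_le_of_lt (le_add_of_nonneg_right (mul_nonneg hs (hx _))) (hω j hj)

lemma pairwise_disjoint_gapEvent (hx : ∀ i, 0 ≤ x i) (hs : 0 ≤ s) (ξ : Fin n → Ω → ℝ) :
    Pairwise (Disjoint on (gapEvent n x ξ s)) := fun _ _ hτσ =>
  disjoint_left.2 fun _ hτ hσ => hτσ (Equiv.Perm.eq_of_strictMono_comp
    (strictMono_comp_of_mem_gapEvent hx hs hτ) (strictMono_comp_of_mem_gapEvent hx hs hσ))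

/-- On `E_τ(s)`, this is exactly what the residual subtracts from `ξ_i`. -/
def gapShift (x : Fin n → ℝ) (s : ℝ) (τ : Equiv.Perm (Fin n)) (i : Fin n) : ℝ :=
  s * ∑ k ∈ Finset.Iio (τ.symm i), x (τ k)

lemma gapShift_apply_perm (τ : Equiv.Perm (Fin n)) (m : Fin n) :
    gapShift x s τ (τ m) = s * ∑ k ∈ Finset.Iio m, x (τ k) := by
  rw [gapShift, Equiv.symm_apply_apply]

lemma gapShift_nonneg (hx : ∀ i, 0 ≤ x i) (hs : 0 ≤ s) (τ : Equiv.Perm (Fin n)) :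
    0 ≤ gapShift x s τ := fun _ => mul_nonneg hs (Finset.sum_nonneg fun _ _ => hx _)

lemma monotone_gapShift_comp (hx : ∀ i, 0 ≤ x i) (hs : 0 ≤ s) (τ : Equiv.Perm (Fin n)) :
    Monotone (gapShift x s τ ∘ τ) := fun m m' hm => by
  simp only [comp_apply, gapShift_apply_perm]
  exact mul_le_mul_of_nonneg_left (Finset.sum_le_sum_of_subset_of_nonneg
    (Finset.Iio_subset_Iio hm) fun _ _ _ => hx _) hs

lemma gapShift_succ (τ : Equiv.Perm (Fin n)) {j : ℕ} (hj : j + 1 < n) :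
    gapShift x s τ (τ ⟨j + 1, hj⟩)
      = gapShift x s τ (τ ⟨j, Nat.lt_of_succ_lt hj⟩) + s * x (τ ⟨j, Nat.lt_of_succ_lt hj⟩) := by
  have hIio : Finset.Iio (⟨j + 1, hj⟩ : Fin n) = Finset.Iic ⟨j, Nat.lt_of_succ_lt hj⟩ := by
    ext k
    simp only [Finset.mem_Iio, Finset.mem_Iic, Fin.lt_def, Fin.le_def]
    omega
  rw [gapShift_apply_perm, gapShift_apply_perm, hIio, ← Finset.sum_Iio_add_eq_sum_Iic, mul_add]

lemma sum_mul_gapShift (x : Fin n → ℝ) (s : ℝ) (τ : Equiv.Perm (Fin n)) :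
    ∑ i, x i * gapShift x s τ i = s * pairSum n x := by
  rw [← Equiv.sum_comp τ, ← pairSum_comp_perm x τ, pairSum, Finset.mul_sum]
  simp_rw [gapShift_apply_perm, Finset.mul_sum, comp_apply]
  refine (Finset.sum_comm' (t' := Finset.univ) (s' := Finset.Ioi) fun m k => by simp).trans ?_
  exact Finset.sum_congr rfl fun _ _ => Finset.sum_congr rfl fun _ _ => by ring

lemma mem_gapEvent_iff (τ : Equiv.Perm (Fin n)) (y : Fin n → ℝ) :
    y ∈ gapEvent n x Function.eval s τ ↔ StrictMono ((y - gapShift x s τ) ∘ τ) := by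
  rw [Fin.strictMono_iff_lt_of_succ_lt]
  refine forall₂_congr fun j hj => ?_
  simp only [comp_apply, Pi.sub_apply, Function.eval, gapShift_succ τ hj]
  constructor <;> intro h <;> linarith

lemma residualVar_eq_sub_gapShift {τ : Equiv.Perm (Fin n)} {y : Fin n → ℝ}
    (hy : StrictMono (y ∘ τ)) (i : Fin n) :
    residualVar n x Function.eval s i y = y i - gapShift x s τ i := by
  have hlt (k : Fin n) : y (τ k) < y i ↔ k < τ.symm i := by
    conv_lhs => rw [← τ.apply_symm_apply i]
    exact hy.lt_iff_lt
  rw [residualVar, gapShift, Finset.sum_erase _ (by simp), ← Equiv.sum_comp τ,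
    ← Finset.filter_gt_eq_Iio, Finset.sum_filter]
  simp only [Function.eval, hlt, mul_ite, mul_one, mul_zero]

end Ordering

section SortedBox

variable {n : ℕ}

def sortedBox (v : Fin n → ℝ) (τ : Equiv.Perm (Fin n)) : Set (Fin n → ℝ) :=
  Icc 0 v ∩ {u | StrictMono (u ∘ τ)}

lemma measurableSet_sortedBox (v : Fin n → ℝ) (τ : Equiv.Perm (Fin n)) :
    MeasurableSet (sortedBox v τ) := by
  have h : {u : Fin n → ℝ | StrictMono (u ∘ τ)}
      = ⋂ a, ⋂ b, ⋂ (_ : a < b), {u | u (τ a) < u (τ b)} := by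
    ext u
    simp [StrictMono]
  refine measurableSet_Icc.inter ?_
  rw [h]
  exact .iInter fun a => .iInter fun b => .iInter fun _ =>
    measurableSet_lt (measurable_pi_apply _) (measurable_pi_apply _)

lemma pairwise_disjoint_sortedBox (v : Fin n → ℝ) : Pairwise (Disjoint on sortedBox v) :=
  fun _ _ hτσ => disjoint_left.2 fun _ hτ hσ =>
    hτσ (Equiv.Perm.eq_of_strictMono_comp hτ.2 hσ.2)

lemma sum_pi_sortedBox {μ : Fin n → Measure ℝ} [∀ i, IsProbabilityMeasure (μ i)]
    [∀ i, NullSingletonClass (μ i)] (v : Fin n → ℝ) :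
    ∑ τ, Measure.pi μ (sortedBox v τ) = Measure.pi μ (Icc 0 v) := by
  rw [← tsum_fintype (L := .unconditional _),
    ← measure_iUnion (pairwise_disjoint_sortedBox v) (measurableSet_sortedBox v)]
  have hties : Icc 0 v \ ⋃ τ, sortedBox v τ ⊆ ⋃ i, ⋃ j, ⋃ (_ : i ≠ j), {u | u i = u j} := by
    rintro u ⟨hu, hnot⟩
    by_contra hinj
    simp only [mem_iUnion, mem_ofPred_eq, not_exists] at hinj
    have hinj : Injective u := fun i j h => by_contra fun hij => hinj i j hij h
    exact hnot (mem_iUnion.2 ⟨Tuple.sort u, hu,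
      (Tuple.monotone_sort u).strictMono_of_injective (hinj.comp (Tuple.sort u).injective)⟩)
  exact measure_eq_measure_of_null_sdiff (iUnion_subset fun _ _ hu => hu.1)
    (measure_mono_null hties (measure_iUnion_null fun _ => measure_iUnion_null fun _ =>
      measure_iUnion_null fun hij => Measure.pi_coord_eq_coord_null hij))

variable {x : Fin n → ℝ} {s : ℝ}

lemma gapEvent_inter_residuals_inter_Ici (hx : ∀ i, 0 ≤ x i) (hs : 0 ≤ s) (v : Fin n → ℝ)
    (τ : Equiv.Perm (Fin n)) :
    gapEvent n x Function.eval s τ ∩ (⋂ i, {y | residualVar n x Function.eval s i y ≤ v i})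
        ∩ Ici 0 = (· - gapShift x s τ) ⁻¹' sortedBox v τ := by
  ext y
  simp only [mem_inter_iff, mem_iInter, mem_ofPred_eq, mem_preimage, sortedBox, mem_Icc,
    mem_gapEvent_iff]
  refine ⟨fun ⟨⟨hmono, hres⟩, hy0⟩ => ?_, fun ⟨⟨hu0, huv⟩, hmono⟩ => ?_⟩ <;>
    have hy : StrictMono (y ∘ τ) := by
      simpa [comp_def] using hmono.add_monotone (monotone_gapShift_comp hx hs τ)
  · refine ⟨⟨fun i => ?_, fun i => ?_⟩, hmono⟩
    · have h0 : gapShift x s τ (τ ⟨0, i.pos⟩) = 0 := by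
        have : Finset.Iio (⟨0, i.pos⟩ : Fin n) = ∅ := by ext k; simp [Fin.lt_def]
        rw [gapShift_apply_perm, this, Finset.sum_empty, mul_zero]
      have hle := hmono.monotone (show ⟨0, i.pos⟩ ≤ τ.symm i from Nat.zero_le _)
      simp only [comp_apply, Pi.sub_apply, h0, Equiv.apply_symm_apply] at hle
      show (0 : ℝ) ≤ y i - gapShift x s τ i
      linarith [show (0 : ℝ) ≤ y (τ ⟨0, i.pos⟩) from mem_Ici.1 hy0 _]
    · simpa [residualVar_eq_sub_gapShift hy] using hres i
  · refine ⟨⟨hmono, fun i => ?_⟩, ?_⟩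
    · simpa [residualVar_eq_sub_gapShift hy] using huv i
    · simpa using add_nonneg hu0 (gapShift_nonneg hx hs τ)

end SortedBox

section Measurability

variable {n : ℕ} {Ω : Type*} [MeasurableSpace Ω] {ξ : Fin n → Ω → ℝ}

lemma measurableSet_gapEvent (hξ : ∀ i, Measurable (ξ i)) (x : Fin n → ℝ) (s : ℝ)
    (τ : Equiv.Perm (Fin n)) : MeasurableSet (gapEvent n x ξ s τ) := by
  simp only [gapEvent, ofPred_forall]
  exact .iInter fun j => .iInter fun hj => measurableSet_lt ((hξ _).add_const _) (hξ _)

lemma measurable_residualVar (hξ : ∀ i, Measurable (ξ i)) (x : Fin n → ℝ) (s : ℝ) (i : Fin n) :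
    Measurable (residualVar n x ξ s i) :=
  (hξ i).sub <| .const_mul (Finset.measurable_sum _ fun j _ => .const_mul
    (.ite (measurableSet_lt (hξ j) (hξ i)) measurable_const measurable_const) _) _

end Measurability

lemma pi_expMeasure_gapEvents_inter_residuals {n : ℕ} {x : Fin n → ℝ} (hx : ∀ i, 0 < x i)
    {s : ℝ} (hs : 0 ≤ s) {v : Fin n → ℝ} (hv : 0 ≤ v) :
    Measure.pi (fun i => expMeasure (x i))
        ((⋃ τ, gapEvent n x Function.eval s τ) ∩
          ⋂ i, {y | residualVar n x Function.eval s i y ≤ v i}) =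
      ENNReal.ofReal (exp (-(s * pairSum n x)) * ∏ i, (1 - exp (-(x i * v i)))) := by
  have := fun i => isProbabilityMeasure_expMeasure (hx i)
  have hx' i := (hx i).le
  set μ := Measure.pi fun i => expMeasure (x i)
  set R := ⋂ i, {y | residualVar n x Function.eval s i y ≤ v i}
  have hpieces τ : gapEvent n x Function.eval s τ ∩ R ∩ Ici 0
      = (· - gapShift x s τ) ⁻¹' sortedBox v τ := gapEvent_inter_residuals_inter_Ici hx' hs v τ
  have hmeas τ : MeasurableSet (gapEvent n x Function.eval s τ ∩ R ∩ Ici 0) := by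
    rw [hpieces]
    exact measurable_sub_const _ (measurableSet_sortedBox v τ)
  calc μ ((⋃ τ, gapEvent n x Function.eval s τ) ∩ R)
      = μ (⋃ τ, gapEvent n x Function.eval s τ ∩ R ∩ Ici 0) := by
        rw [← measure_inter_conull (pi_expMeasure_compl_Ici_zero hx), iUnion_inter, iUnion_inter]
    _ = ∑ τ, μ ((· - gapShift x s τ) ⁻¹' sortedBox v τ) := by
        rw [measure_iUnion ((pairwise_disjoint_gapEvent hx' hs _).mono fun _ _ h =>
          h.mono (inter_subset_left.trans inter_subset_left)
            (inter_subset_left.trans inter_subset_left)) hmeas, tsum_fintype]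
        simp_rw [hpieces]
    _ = ∑ τ, ENNReal.ofReal (exp (-(s * pairSum n x))) * μ (sortedBox v τ) := by
        refine Finset.sum_congr rfl fun τ _ => ?_
        rw [pi_expMeasure_preimage_sub hx (gapShift_nonneg hx' hs τ) (measurableSet_sortedBox v τ)
          fun u hu => hu.1.1, sum_mul_gapShift]
    _ = _ := by
        rw [← Finset.mul_sum, sum_pi_sortedBox, pi_expMeasure_Icc_zero hx hv,
          ← ENNReal.ofReal_prod_of_nonneg, ← ENNReal.ofReal_mul (exp_nonneg _)]
        exact fun i _ => sub_nonneg.2 (exp_le_one_iff.2 (neg_nonpos.2 (mul_nonneg (hx' i) (hv i))))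

theorem residuals_on_union_gapEvents_general (n : ℕ) (x : Fin n → ℝ)
    (hx : ∀ i, 0 < x i)
    {Ω : Type*} [MeasurableSpace Ω] (P : Measure Ω) [IsProbabilityMeasure P]
    (ξ : Fin n → Ω → ℝ) (hmeas : ∀ i, Measurable (ξ i))
    (hindep : iIndepFun ξ P)
    (hdist : ∀ i, P.map (ξ i) = expMeasure (x i))
    (s : ℝ) (hs : 0 ≤ s) (v : Fin n → ℝ) (hv : ∀ i, 0 < v i) :
    P ((⋃ τ : Equiv.Perm (Fin n), gapEvent n x ξ s τ) ∩
        ⋂ i : Fin n, {ω | residualVar n x ξ s i ω ≤ v i}) =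
      ENNReal.ofReal (Real.exp (-(s * pairSum n x)) *
        ∏ i : Fin n, (1 - Real.exp (-(x i * v i)))) := by
  have hlaw : P.map (fun ω i => ξ i ω) = Measure.pi fun i => expMeasure (x i) := by
    rw [(iIndepFun_iff_map_fun_eq_pi_map fun i => (hmeas i).aemeasurable).1 hindep]
    simp_rw [hdist]
  have hS : MeasurableSet ((⋃ τ, gapEvent n x Function.eval s τ) ∩
      ⋂ i, {y | residualVar n x Function.eval s i y ≤ v i}) :=
    (MeasurableSet.iUnion fun τ => measurableSet_gapEvent measurable_pi_apply x s τ) |>.inter <|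
      .iInter fun i => measurableSet_le (measurable_residualVar measurable_pi_apply x s i)
        measurable_const
  rw [← pi_expMeasure_gapEvents_inter_residuals hx hs fun i => (hv i).le, ← hlaw,
    Measure.map_apply (measurable_pi_lambda _ hmeas) hS, preimage_inter, preimage_iUnion,
    preimage_iInter]
  rfl

/-- for `n ≥ 2`, `s ≥ 0` and positive `v_1, …, v_n`,
`P((⋃_τ E_τ(s)) ∩ {R_i(s) ≤ v_i ∀i}) = e^{-s Σ_{i<j} x_i x_j} · ∏_{i=1}^n (1 − e^{-x_i v_i})`:
conditionally on `{S > s} = ⋃_τ E_τ(s)`, the residuals `R_1(s), …, R_n(s)` are independent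
exponentials with respective rates `x_1, …, x_n`. -/
theorem residuals_on_union_gapEvents (n : ℕ) (hn : 2 ≤ n) (x : Fin n → ℝ)
    (hx : ∀ i, 0 < x i)
    {Ω : Type*} [MeasurableSpace Ω] (P : Measure Ω) [IsProbabilityMeasure P]
    (ξ : Fin n → Ω → ℝ) (hmeas : ∀ i, Measurable (ξ i))
    (hindep : iIndepFun ξ P)
    (hdist : ∀ i, P.map (ξ i) = expMeasure (x i))
    (s : ℝ) (hs : 0 ≤ s) (v : Fin n → ℝ) (hv : ∀ i, 0 < v i) :
    P ((⋃ τ : Equiv.Perm (Fin n), gapEvent n x ξ s τ) ∩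
        ⋂ i : Fin n, {ω | residualVar n x ξ s i ω ≤ v i}) =
      ENNReal.ofReal (Real.exp (-(s * pairSum n x)) *
        ∏ i : Fin n, (1 - Real.exp (-(x i * v i)))) :=
  residuals_on_union_gapEvents_general n x hx P ξ hmeas hindep hdist s hs v hv
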